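/- arXiv:2302.12964 — 4 statements merged into one kernel-verified Lean document; each statement's English description precedes it below -/
import Mathlib

section
/- Let 0 < ℓ < ω and let B ⊆ 2^ℓ be a linearly independent set of vectors in the vector space (2^ℓ, +) over ℤ/2ℤ. If A ⊆ 2^ℓ has |A| ≥ 5 and A + A ⊆ B + B (where X + Y = {x + y : x ∈ X, y ∈ Y}), then there is a unique x ∈ 2^ℓ such that A + x ⊆ B. -/
/-!
Fix `a₀ ∈ A`. Over `ZMod 2`, sums of subsets of `B` add like symmetric differences, so by
independence every element of `B + B` is the sum of a unique subset of `B` of size `0` or `2`.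
Thus each `a ≠ a₀` in `A` determines a pair `P a ⊆ B` with sum `a + a₀`, and since
`(a + a₀) + (a' + a₀) = a + a' ∈ B + B`, any two of these pairs meet. At least four pairwise
intersecting pairs share a common element `w` (three could form a triangle), and then
`a + a₀ + w ∈ B` for every `a ∈ A`.

If `A + x` and `A + y` both lie in `B` with `x ≠ y`, comparing the two decompositions of `p + q`
forces `p + q = x + y` for all distinct `p, q ∈ A`, which is impossible once `A` has three
elements.
-/

open scoped Pointwise

open Finset

section

variable {α : Type*}

theorem Finset.eq_or_eq_of_card_eq_two {s : Finset α} (hs : s.card = 2) {a b c : α}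
    (ha : a ∈ s) (hb : b ∈ s) (hab : a ≠ b) (hc : c ∈ s) : c = a ∨ c = b := by
  classical
  have hpair : s = {a, b} :=
    (eq_of_subset_of_card_le (insert_subset ha (singleton_subset_iff.2 hb))
      (by rw [hs, card_pair hab])).symm
  simpa [hpair] using hc

theorem Finset.subset_union_union_of_card_eq_two [DecidableEq α] {r s t u : Finset α}
    (hr : r.card = 2) (hs : ¬Disjoint r s) (ht : ¬Disjoint r t) (hu : ¬Disjoint r u)
    (hstu : Disjoint r (s ∩ t ∩ u)) : r ⊆ s ∪ t ∪ u := by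
  intro x hxr
  by_contra hx
  simp only [mem_union, not_or] at hx
  obtain ⟨⟨hxs, hxt⟩, hxu⟩ := hx
  obtain ⟨y, hyr, hys⟩ := not_disjoint_iff.mp hs
  obtain ⟨y', hy'r, hy't⟩ := not_disjoint_iff.mp ht
  obtain ⟨y'', hy''r, hy''u⟩ := not_disjoint_iff.mp hu
  have hxy : x ≠ y := by rintro rfl; exact hxs hys
  have hy' : y' = y := (eq_or_eq_of_card_eq_two hr hxr hyr hxy hy'r).resolve_left
    (by rintro rfl; exact hxt hy't)
  have hy'' : y'' = y := (eq_or_eq_of_card_eq_two hr hxr hyr hxy hy''r).resolve_left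
    (by rintro rfl; exact hxu hy''u)
  subst hy' hy''
  exact disjoint_left.mp hstu hyr (mem_inter.2 ⟨mem_inter.2 ⟨hys, hy't⟩, hy''u⟩)

theorem Set.Intersecting.exists_forall_mem_of_card_eq_two [DecidableEq α] {F : Set (Finset α)}
    (hF : F.Intersecting) (hcard : ∀ s ∈ F, s.card = 2) (hF3 : 3 < F.ncard) :
    ∃ w, ∀ s ∈ F, w ∈ s := by
  obtain ⟨s, hs⟩ := Set.nonempty_of_ncard_ne_zero (by omega : F.ncard ≠ 0)
  obtain ⟨u, v, huv, rfl⟩ := card_eq_two.mp (hcard _ hs)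
  by_contra! hstar
  obtain ⟨t, ht, hut⟩ := hstar u
  obtain ⟨t', ht', hvt'⟩ := hstar v
  have hcommon : ∀ x ∈ ({u, v} : Finset α), x ∈ t → x ∉ t' := by
    simp only [Finset.mem_insert, Finset.mem_singleton]
    rintro x (rfl | rfl) hxt
    exacts [absurd hxt hut, hvt']
  have ht't : t' ⊆ {u, v} ∪ t := by
    simpa using subset_union_union_of_card_eq_two (hcard t' ht') (hF ht' hs) (hF ht' ht)
      (hF ht' ht) (Finset.disjoint_left.2 fun x hxt' hx ↦ by
        simp only [Finset.mem_inter] at hx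
        exact hcommon x hx.1.1 hx.1.2 hxt')
  have hcover : ∀ r ∈ F, r ⊆ {u, v} ∪ t := fun r hr ↦ by
    have := subset_union_union_of_card_eq_two (hcard r hr) (hF hr hs) (hF hr ht) (hF hr ht')
      (Finset.disjoint_left.2 fun x _ hx ↦ by
        simp only [Finset.mem_inter] at hx
        exact hcommon x hx.1.1 hx.1.2 hx.2)
    rwa [Finset.union_eq_left.2 ht't] at this
  have hU : ({u, v} ∪ t).card ≤ 3 := by
    have hunion := card_union_add_card_inter {u, v} t
    have hinter : 0 < ({u, v} ∩ t).card :=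
      card_pos.2 (Finset.not_disjoint_iff_nonempty_inter.1 (hF hs ht))
    rw [card_pair huv, hcard t ht] at hunion
    omega
  have hF_sub : F ⊆ ↑(Finset.powersetCard 2 ({u, v} ∪ t)) := fun r hr ↦
    mem_powersetCard.2 ⟨hcover r hr, hcard r hr⟩
  have hle := (Set.ncard_le_ncard hF_sub).trans_eq (Set.ncard_coe_finset _)
  rw [card_powersetCard] at hle
  have h32 : Nat.choose 3 2 = 3 := rfl
  have := Nat.choose_le_choose 2 hU
  omega

end

namespace ZModModule

variable {α V : Type*} [AddCommGroup V] [Module (ZMod 2) V] [DecidableEq α]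

theorem sum_symmDiff (s t : Finset α) (f : α → V) :
    ∑ x ∈ symmDiff s t, f x = ∑ x ∈ s, f x + ∑ x ∈ t, f x := by
  have hsdiff : ∑ x ∈ symmDiff s t, f x + ∑ x ∈ s ∩ t, f x = ∑ x ∈ s ∪ t, f x := by
    rw [symmDiff_eq_sup_sdiff_inf]
    exact sum_sdiff inter_subset_union
  rw [← sum_union_inter, ← hsdiff, add_assoc, add_self, add_zero]

theorem add_eq_add_swap {a b c d : V} (h : a + b = c + d) : a + c = b + d := by
  rw [← sub_eq_zero, sub_eq_add, add_add_add_comm, ← sub_eq_add, sub_eq_zero.mpr h]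

theorem exists_finset_sum_eq_of_mem_add {B : Set V} {v : V} (hv : v ∈ B + B) :
    ∃ s : Finset V, ↑s ⊆ B ∧ (s = ∅ ∨ s.card = 2) ∧ ∑ x ∈ s, x = v := by
  classical
  obtain ⟨b, hb, c, hc, rfl⟩ := Set.mem_add.mp hv
  by_cases hbc : b = c
  · exact ⟨∅, by simp, .inl rfl, by simp [hbc, add_self]⟩
  · exact ⟨{b, c}, by simp [Set.insert_subset_iff, hb, hc], .inr (card_pair hbc), sum_pair hbc⟩

theorem sum_add_mem_of_card_eq_two [DecidableEq V] {s : Finset V} (hs : s.card = 2) {w : V}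
    (hw : w ∈ s) : ∑ x ∈ s, x + w ∈ s := by
  obtain ⟨x, y, hxy, rfl⟩ := card_eq_two.1 hs
  rw [sum_pair hxy]
  rcases mem_insert.1 hw with rfl | hwy
  · rw [add_comm w, add_assoc, add_self, add_zero]
    exact mem_insert_of_mem (mem_singleton_self y)
  · rw [mem_singleton.1 hwy, add_assoc, add_self, add_zero]
    exact mem_insert_self x {y}

end ZModModule

namespace LinearIndepOn

variable {V : Type*} [AddCommGroup V] [Module (ZMod 2) V] {A B : Set V}

theorem injOn_finset_sum (hB : LinearIndepOn (ZMod 2) id B) :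
    {s : Finset V | ↑s ⊆ B}.InjOn fun s ↦ ∑ x ∈ s, x := by
  classical
  intro s hs t ht hst
  have hzero : ∑ x ∈ symmDiff s t, (1 : ZMod 2) • x = 0 := by
    simp only [one_smul, ZModModule.sum_symmDiff]
    simp only at hst
    rw [hst, ZModModule.add_self]
  have hsub : (↑(symmDiff s t) : Set V) ⊆ B := by
    rw [coe_symmDiff]
    exact symmDiff_le_sup.trans (Set.union_subset hs ht)
  have hempty : symmDiff s t = ∅ := eq_empty_of_forall_notMem fun x hx ↦
    one_ne_zero (linearIndepOn_iff'.mp hB _ _ hsub hzero x hx)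
  exact symmDiff_eq_bot.mp hempty

theorem eq_or_eq_of_add_eq_add (hB : LinearIndepOn (ZMod 2) id B) {b c b' c' : V}
    (hb : b ∈ B) (hc : c ∈ B) (hb' : b' ∈ B) (hc' : c' ∈ B) (hbc : b ≠ c)
    (h : b + c = b' + c') : b = b' ∨ b = c' := by
  classical
  have hpair : ({b, c} : Finset V) = {b', c'} := by
    refine hB.injOn_finset_sum (by simp [Set.insert_subset_iff, hb, hc])
      (by simp [Set.insert_subset_iff, hb', hc']) ?_
    have hb'c' : b' ≠ c' := by
      rintro rfl
      rw [ZModModule.add_self, ← ZModModule.sub_eq_add, sub_eq_zero] at h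
      exact hbc h
    simp only [sum_pair hbc, sum_pair hb'c', h]
  have hmem : b ∈ ({b', c'} : Finset V) := hpair ▸ mem_insert_self b {c}
  simpa using hmem

theorem not_disjoint_of_sum_add_sum_mem_add (hB : LinearIndepOn (ZMod 2) id B) {s t : Finset V}
    (hs : ↑s ⊆ B) (ht : ↑t ⊆ B) (hs2 : s.card = 2) (ht2 : t.card = 2)
    (hst : ∑ x ∈ s, x + ∑ x ∈ t, x ∈ B + B) : ¬Disjoint s t := by
  classical
  intro hdisj
  obtain ⟨Q, hQB, hQcard, hQsum⟩ := ZModModule.exists_finset_sum_eq_of_mem_add hst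
  have hQ : symmDiff s t = Q := by
    refine hB.injOn_finset_sum ?_ hQB (by simp only [ZModModule.sum_symmDiff, hQsum])
    rw [Set.mem_ofPred_eq, coe_symmDiff]
    exact symmDiff_le_sup.trans (Set.union_subset hs ht)
  have h4 : (symmDiff s t).card = 4 := by
    rw [hdisj.symmDiff_eq_sup, sup_eq_union, card_union_of_disjoint hdisj, hs2, ht2]
  rw [hQ] at h4
  rcases hQcard with rfl | h2
  · simp at h4
  · omega

theorem exists_forall_add_mem_of_add_subset_add (hB : LinearIndepOn (ZMod 2) id B)
    (hA : 4 < A.ncard) (hAB : A + A ⊆ B + B) : ∃ x, ∀ a ∈ A, a + x ∈ B := by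
  classical
  obtain ⟨a₀, ha₀⟩ := Set.nonempty_of_ncard_ne_zero (by omega : A.ncard ≠ 0)
  choose! P hPB hPcard hPsum using fun a (ha : a ∈ A) ↦
    ZModModule.exists_finset_sum_eq_of_mem_add (hAB (Set.add_mem_add ha ha₀))
  set T := A \ {a₀}
  have hTcard : 3 < T.ncard := by rw [Set.ncard_sdiff_singleton_of_mem ha₀]; omega
  have hP2 : ∀ a ∈ T, (P a).card = 2 := by
    rintro a ⟨ha, hne⟩
    refine (hPcard a ha).resolve_left fun hempty ↦ hne ?_
    have hsum := hPsum a ha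
    rwa [hempty, sum_empty, eq_comm, ← ZModModule.sub_eq_add, sub_eq_zero] at hsum
  have hinj : T.InjOn P := fun a ha a' ha' h ↦
    add_right_cancel ((hPsum a ha.1).symm.trans (h ▸ hPsum a' ha'.1))
  have hint : (P '' T).Intersecting := by
    rintro _ ⟨a, ha, rfl⟩ _ ⟨a', ha', rfl⟩
    refine hB.not_disjoint_of_sum_add_sum_mem_add (hPB a ha.1) (hPB a' ha'.1) (hP2 a ha)
      (hP2 a' ha') ?_
    rw [hPsum a ha.1, hPsum a' ha'.1, add_comm a' a₀, ZModModule.add_add_add_cancel]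
    exact hAB (Set.add_mem_add ha.1 ha'.1)
  obtain ⟨w, hw⟩ := hint.exists_forall_mem_of_card_eq_two
    (by rintro _ ⟨a, ha, rfl⟩; exact hP2 a ha) (by rwa [hinj.ncard_image])
  refine ⟨a₀ + w, fun a ha ↦ ?_⟩
  by_cases h : a = a₀
  · obtain ⟨a₁, ha₁⟩ : T.Nonempty := Set.nonempty_of_ncard_ne_zero (by omega)
    rw [h, ← add_assoc, ZModModule.add_self, zero_add]
    exact hPB a₁ ha₁.1 (hw _ ⟨a₁, ha₁, rfl⟩)
  · have haT : a ∈ T := ⟨ha, h⟩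
    rw [← add_assoc, ← hPsum a ha]
    exact hPB a ha (ZModModule.sum_add_mem_of_card_eq_two (hP2 a haT) (hw _ ⟨a, haT, rfl⟩))

theorem eq_of_forall_add_mem (hB : LinearIndepOn (ZMod 2) id B) (hA : 2 < A.ncard) {x y : V}
    (hx : ∀ a ∈ A, a + x ∈ B) (hy : ∀ a ∈ A, a + y ∈ B) : x = y := by
  by_contra hxy
  have hsum : ∀ p ∈ A, ∀ q ∈ A, p ≠ q → p + q = x + y := by
    intro p hp q hq hpq
    have h : (p + x) + (q + x) = (p + y) + (q + y) := by
      rw [add_add_add_comm p x, add_add_add_comm p y, ZModModule.add_self, ZModModule.add_self]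
    rcases hB.eq_or_eq_of_add_eq_add (hx p hp) (hx q hq) (hy p hp) (hy q hq) (by simpa using hpq) h
      with h' | h'
    · exact absurd (add_left_cancel h') hxy
    · exact ZModModule.add_eq_add_swap h'
  obtain ⟨p, hp, q, hq, r, hr, hpq, hpr, hqr⟩ :=
    (Set.two_lt_ncard (Set.finite_of_ncard_pos (by omega))).1 hA
  exact hqr (add_left_cancel ((hsum p hp q hq hpq).trans (hsum p hp r hr hpr).symm))

theorem existsUnique_add_mem_of_add_subset_add (hB : LinearIndepOn (ZMod 2) id B)
    (hA : 5 ≤ A.ncard) (hAB : A + A ⊆ B + B) : ∃! x, ∀ a ∈ A, a + x ∈ B := by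
  obtain ⟨x, hx⟩ := hB.exists_forall_add_mem_of_add_subset_add (by omega) hAB
  exact ⟨x, hx, fun y hy ↦ hB.eq_of_forall_add_mem (by omega) hy hx⟩

end LinearIndepOn

theorem stmt0_general (ℓ : ℕ) (B A : Set (Fin ℓ → ZMod 2))
    (hB : LinearIndependent (ZMod 2) ((↑) : B → (Fin ℓ → ZMod 2)))
    (hA : 5 ≤ A.ncard) (hAB : A + A ⊆ B + B) :
    ∃! x : Fin ℓ → ZMod 2, ∀ a ∈ A, a + x ∈ B :=
  LinearIndepOn.existsUnique_add_mem_of_add_subset_add hB hA hAB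

theorem stmt0 (ℓ : ℕ) (hℓ : 0 < ℓ) (B A : Set (Fin ℓ → ZMod 2))
    (hB : LinearIndependent (ZMod 2) ((↑) : B → (Fin ℓ → ZMod 2)))
    (hA : 5 ≤ A.ncard) (hAB : A + A ⊆ B + B) :
    ∃! x : Fin ℓ → ZMod 2, ∀ a ∈ A, a + x ∈ B :=
  stmt0_general ℓ B A hB hA hAB
end

section
/- Let Ō = ⟨O_i : i < i*⟩ be a nice indexed base and let 2 ≤ K < ω. Suppose for each k < K, ū^k is an O_{i(k)}-tower for some i(k) < i*. Then there exist O_{i(k)}-towers v̄^k = ⟨v^k_n : n < ω⟩ (for k < K) such that C(v̄^k) = C(ū^k), v^k_0 = u^k_0, and the intersection ⋂_{k<K} {ℓ(v^k_n) : n < ω} is infinite. -/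
attribute [local instance] Classical.propDecidable

/-- Finite binary sequences, as lists over `ZMod 2`. -/
abbrev BSeq : Type := List (ZMod 2)

/-- Pad/truncate `ρ` to length exactly `n`. -/
def padTo (ρ : BSeq) (n : ℕ) : BSeq := (ρ ++ List.replicate n 0).take n

theorem padTo_length (ρ : BSeq) (n : ℕ) : (padTo ρ n).length = n := by
  unfold padTo
  rw [List.length_take, List.length_append, List.length_replicate]
  omega

/-- A level set: a nonempty set of binary sequences, all of one length. -/
structure LSet where
  len : ℕ
  elts : Set BSeq
  ne : elts.Nonempty
  hlen : ∀ x ∈ elts, x.length = len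

/-- Translation of a level set by a sequence (of the matching length). -/
def LSet.tr (w : LSet) (ρ : BSeq) : LSet where
  len := w.len
  elts := (fun x => List.zipWith (· + ·) x (padTo ρ w.len)) '' w.elts
  ne := w.ne.image _
  hlen := by
    rintro x ⟨y, hy, rfl⟩
    rw [List.length_zipWith, padTo_length, w.hlen y hy, Nat.min_self]

/-- Restriction of a level set to a smaller length. -/
def LSet.res (w : LSet) (ℓ : ℕ) (h : ℓ ≤ w.len) : LSet where
  len := ℓ
  elts := (List.take ℓ) '' w.elts
  ne := w.ne.image _
  hlen := by
    rintro x ⟨y, hy, rfl⟩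
    rw [List.length_take, w.hlen y hy]
    omega

/-- A simple base (Definition 3.2): a strict partial order on level sets
satisfying clauses (a), (b), (c). -/
structure SimpleBase where
  mem : LSet → Prop
  prec : LSet → LSet → Prop
  prec_mem : ∀ u v, prec u v → mem u ∧ mem v
  irrefl : ∀ u, ¬ prec u u
  trans : ∀ u v w, prec u v → prec v w → prec u w
  restr : ∀ u v, prec u v → u.len < v.len ∧ u.elts = (List.take u.len) '' v.elts
  ext : ∀ u, mem u → ∃ v, prec u v
  tr_mem : ∀ u ρ, ρ.length = u.len → mem u → mem (u.tr ρ)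
  tr_prec : ∀ u v ρ, ρ.length = v.len → prec u v → prec (u.tr (ρ.take u.len)) (v.tr ρ)

/-- An `O`-tower: a `≺`-increasing `ω`-sequence of level sets. -/
def Tower (S : SimpleBase) (u : ℕ → LSet) : Prop := ∀ n, S.prec (u n) (u (n + 1))

/-- Restriction of `η ∈ 2^ω` to a finite length. -/
def resFn (η : ℕ → ZMod 2) (n : ℕ) : BSeq := List.ofFn (fun i : Fin n => η i)

/-- The cover of a tower. -/
def cover (u : ℕ → LSet) : Set (ℕ → ZMod 2) :=
  {η | ∀ n, resFn η (u n).len ∈ (u n).elts}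
/-- An indexed base `⟨O_i : i < i*⟩`, `0 < i* ≤ ω` (`i* = ⊤` codes `ω`). -/
structure IndexedBase where
  istar : ℕ∞
  pos : 0 < istar
  base : ℕ → SimpleBase

/-- Niceness of an indexed base (Definition 3.7, clauses (i)–(v)). -/
def Nice (B : IndexedBase) : Prop :=
  ((6 : ℕ∞) ≤ B.istar ∨ ∃ i : ℕ, (i : ℕ∞) < B.istar ∧ ∀ u, (B.base i).mem u →
      ∃ v, (B.base i).prec u v ∧ 6 ≤ v.elts.ncard) ∧
  (∀ i : ℕ, (i : ℕ∞) < B.istar → ∀ u v v' v'', (B.base i).prec u v → (B.base i).prec v v' →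
      (B.base i).prec v' v'' → ∀ ℓ (h1 : v.len ≤ ℓ) (h2 : ℓ ≤ v'.len),
      (B.base i).mem (v'.res ℓ h2) ∧ (B.base i).prec u (v'.res ℓ h2) ∧
      (B.base i).prec (v'.res ℓ h2) v'') ∧
  (∀ i : ℕ, (i : ℕ∞) < B.istar → ∀ u v, (B.base i).prec u v → ∀ ℓ, v.len < ℓ →
      ∀ v' : LSet, v'.len = ℓ → (∀ ν ∈ v.elts, ∃! η, η ∈ v'.elts ∧ ν <+: η) →
      (B.base i).mem v' ∧ (B.base i).prec u v') ∧
  (∀ i : ℕ, (i : ℕ∞) < B.istar → ∀ u v u', (B.base i).prec u v → u'.elts ⊆ u.elts →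
      u'.len = u.len → (B.base i).mem u' → ∀ v' : LSet, v'.len = v.len →
      v'.elts = {η ∈ v.elts | List.take u.len η ∈ u'.elts} →
      (B.base i).mem v' ∧ (B.base i).prec u' v') ∧
  (B.istar = ⊤ → ∀ i : ℕ, {j : ℕ | B.base j = B.base i}.Infinite)

/-- Restriction that silently does nothing when the length is too big. -/
def LSet.res' (w : LSet) (ℓ : ℕ) : LSet := if h : ℓ ≤ w.len then w.res ℓ h else w

lemma LSet.res'_eq (w : LSet) {ℓ : ℕ} (h : ℓ ≤ w.len) : w.res' ℓ = w.res ℓ h :=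
  dif_pos h

def towAuxSup (K : ℕ) (L : Fin K → ℕ → ℕ) (b : Fin K → ℕ) : ℕ :=
  Finset.univ.sup (fun k => L k (b k + 1))

/-- Auxiliary numeric recursion: indices and common levels. -/
def towAux (K : ℕ) (L : Fin K → ℕ → ℕ) : ℕ → (Fin K → ℕ) × ℕ
  | 0 => (fun _ => 0, 0)
  | m+1 =>
    (fun k => max ((towAux K L m).1 k + 2) (towAuxSup K L (towAux K L m).1),
      towAuxSup K L (towAux K L m).1)

lemma towAux_sup_le (K : ℕ) (L : Fin K → ℕ → ℕ) (m : ℕ) (k : Fin K) :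
    L k ((towAux K L m).1 k + 1) ≤ (towAux K L (m+1)).2 :=
  Finset.le_sup (f := fun j => L j ((towAux K L m).1 j + 1)) (Finset.mem_univ k)

lemma towAux_b_succ (K : ℕ) (L : Fin K → ℕ → ℕ) (m : ℕ) (k : Fin K) :
    (towAux K L (m+1)).1 k = max ((towAux K L m).1 k + 2) ((towAux K L (m+1)).2) := rfl

lemma take_resFn (η : ℕ → ZMod 2) {l n : ℕ} (h : l ≤ n) :
    (resFn η n).take l = resFn η l := by
  apply List.ext_getElem
  · simp [resFn]; omega
  · intro i h1 h2
    simp [resFn, List.getElem_take]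
/-- Proposition 3.8: towers can be adjusted, keeping covers and first levels,
so that infinitely many levels are common to all of them. -/
theorem stmt12 (B : IndexedBase) (hB : Nice B) (K : ℕ) (hK : 2 ≤ K)
    (idx : Fin K → ℕ) (hidx : ∀ k, (idx k : ℕ∞) < B.istar)
    (u : Fin K → ℕ → LSet) (hu : ∀ k, Tower (B.base (idx k)) (u k)) :
    ∃ v : Fin K → ℕ → LSet,
      (∀ k, Tower (B.base (idx k)) (v k)) ∧
      (∀ k, cover (v k) = cover (u k)) ∧
      (∀ k, v k 0 = u k 0) ∧
      (⋂ k : Fin K, {ℓ : ℕ | ∃ n, (v k n).len = ℓ}).Infinite := by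
  obtain ⟨-, hnice2, -⟩ := hB
  set S : Fin K → SimpleBase := fun k => B.base (idx k) with hS
  have hrestr : ∀ (k : Fin K) {a c : ℕ}, a < c → (S k).prec (u k a) (u k c) := by
    intro k a c hac
    induction c with
    | zero => omega
    | succ c ih =>
      rcases Nat.lt_succ_iff_lt_or_eq.mp hac with h | rfl
      · exact (S k).trans _ _ _ (ih h) (hu k c)
      · exact hu k a
  have hLmono : ∀ k : Fin K, StrictMono (fun n => (u k n).len) :=
    fun k => strictMono_nat_of_lt_succ (fun n => ((S k).restr _ _ (hu k n)).1)
  set L : Fin K → ℕ → ℕ := fun k n => (u k n).len with hL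
  set b : ℕ → Fin K → ℕ := fun m => (towAux K L m).1 with hbdef
  set lv : ℕ → ℕ := fun m => (towAux K L m).2 with hlvdef
  have hb1 : ∀ m k, L k (b m k + 1) ≤ lv (m+1) := fun m k => towAux_sup_le K L m k
  have hbs : ∀ m k, b (m+1) k = max (b m k + 2) (lv (m+1)) := fun m k => towAux_b_succ K L m k
  have hb2 : ∀ m k, b m k + 2 ≤ b (m+1) k := by
    intro m k; rw [hbs]; exact le_max_left _ _
  have hb3 : ∀ m k, lv (m+1) ≤ L k (b (m+1) k) := by
    intro m k
    calc lv (m+1) ≤ b (m+1) k := by rw [hbs]; exact le_max_right _ _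
    _ ≤ L k (b (m+1) k) := (hLmono k).le_apply
  set v : Fin K → ℕ → LSet :=
    fun k m => Nat.casesOn m (u k 0) (fun m' => (u k (b (m'+1) k)).res' (lv (m'+1))) with hv
  have hv0 : ∀ k, v k 0 = u k 0 := fun _ => rfl
  have hvS : ∀ k m, v k (m+1) = (u k (b (m+1) k)).res (lv (m+1)) (hb3 m k) :=
    fun k m => LSet.res'_eq _ (hb3 m k)
  have hvlen : ∀ k m, (v k (m+1)).len = lv (m+1) := by
    intro k m; rw [hvS]; rfl
  have hvelts : ∀ k m, (v k (m+1)).elts = List.take (lv (m+1)) '' (u k (b (m+1) k)).elts := by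
    intro k m; rw [hvS]; rfl
  have step : ∀ (k : Fin K) (m : ℕ) (w : LSet), (S k).prec w (u k (b m k + 1)) →
      (S k).prec w (v k (m+1)) ∧ (S k).prec (v k (m+1)) (u k (b (m+1) k + 1)) := by
    intro k m w hw
    have h1 : (S k).prec (u k (b m k + 1)) (u k (b (m+1) k)) := by
      refine hrestr k ?_
      have := hb2 m k; omega
    have h2 : (S k).prec (u k (b (m+1) k)) (u k (b (m+1) k + 1)) := hu k _
    have := hnice2 (idx k) (hidx k) w _ _ _ hw h1 h2 (lv (m+1)) (hb1 m k) (hb3 m k)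
    rw [hvS]
    exact ⟨this.2.1, this.2.2⟩
  have inv : ∀ (m : ℕ) (k : Fin K), (S k).prec (v k m) (u k (b m k + 1)) := by
    intro m
    induction m with
    | zero =>
      intro k
      have hb0 : b 0 k = 0 := rfl
      rw [hv0, hb0]
      exact hu k 0
    | succ m ih => exact fun k => (step k m _ (ih k)).2
  have htow : ∀ k, Tower (S k) (v k) := fun k m => (step k m _ (inv m k)).1
  have hbig : ∀ (n : ℕ) (k : Fin K), n < b (n+1) k ∧ n ≤ b n k + 1 := by
    intro n k
    induction n with
    | zero => have := hb2 0 k; omega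
    | succ n ih => have := hb2 n k; have := hb2 (n+1) k; omega
  refine ⟨v, htow, ?_, hv0, ?_⟩
  · -- covers agree
    intro k
    ext η
    constructor
    · intro hη n
      have hm := hη (n+1)
      rw [hvlen, hvelts] at hm
      obtain ⟨ν, hν, hνe⟩ := hm
      have hnb : n < b (n+1) k := (hbig n k).1
      have hle : L k n ≤ lv (n+1) :=
        le_trans ((hLmono k).monotone (by have := (hbig n k).2; omega)) (hb1 n k)
      have : resFn η (L k n) = List.take (L k n) ν := by
        rw [← take_resFn η hle, ← hνe, List.take_take, min_eq_left hle]
      show resFn η (L k n) ∈ (u k n).elts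
      rw [this, ((S k).restr _ _ (hrestr k hnb)).2]
      exact ⟨ν, hν, rfl⟩
    · intro hη n
      cases n with
      | zero => exact hη 0
      | succ m =>
        rw [hvlen, hvelts]
        exact ⟨resFn η (L k (b (m+1) k)), hη (b (m+1) k), take_resFn η (hb3 m k)⟩
  · -- infinitely many common levels
    have hlmono : StrictMono (fun m => lv (m+1)) := by
      apply strictMono_nat_of_lt_succ
      intro m
      have k0 : Fin K := ⟨0, by omega⟩
      calc lv (m+1) ≤ L k0 (b (m+1) k0) := hb3 m k0
        _ < L k0 (b (m+1) k0 + 1) := (hLmono k0) (Nat.lt_succ_self _)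
        _ ≤ lv (m+2) := hb1 (m+1) k0
    apply Set.infinite_of_injective_forall_mem (f := fun m => lv (m+1)) hlmono.injective
    intro m
    rw [Set.mem_iInter]
    intro k
    exact ⟨m+1, hvlen k m⟩
end

section
/- For a tree T ⊆ 2^{<ω} without maximal nodes, an O_i-tower ū = ⟨u_n : n < ω⟩, and x ∈ 2^ω: the cover C(ū) is a subset of lim(T) + x if and only if for every n < ω, u_n ⊆ (T + x), where T + x denotes {t + (x↾|t|) : t ∈ T}. -/
attribute [local instance] Classical.propDecidable

/-- A subtree of `2^{<ω}` (closed under initial segments). -/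
def IsTree (T : Set BSeq) : Prop := ∀ s ∈ T, ∀ t, t <+: s → t ∈ T

/-- A tree has no maximal nodes. -/
def NoMaxNodes (T : Set BSeq) : Prop := ∀ s ∈ T, ∃ t ∈ T, s <+: t ∧ s ≠ t

/-- The branches of a tree `T ⊆ 2^{<ω}`. -/
def limT (T : Set BSeq) : Set (ℕ → ZMod 2) := {η | ∀ n, resFn η n ∈ T}

/-- The translated tree `T + x = {t + (x↾|t|) : t ∈ T}`. -/
def TplusX (T : Set BSeq) (x : ℕ → ZMod 2) : Set BSeq :=
  (fun t => List.zipWith (· + ·) t (resFn x t.length)) '' T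

/-- Translation of a set of branches: `A + x`. -/
def addX (A : Set (ℕ → ZMod 2)) (x : ℕ → ZMod 2) : Set (ℕ → ZMod 2) :=
  (fun y => fun n => y n + x n) '' A

/-! Each element of a level `u n` of a tower extends to a branch of the cover, since every level
is the set of restrictions of the next one; hence `C(ū) ⊆ lim(T) + x` forces `u n ⊆ T + x`.
Conversely, the lengths of the levels are unbounded, so if every `u n ⊆ T + x` then for
`η ∈ C(ū)` arbitrarily long restrictions of `η + x` lie in the tree `T`, and so do all of them. -/

lemma resFn_length (η : ℕ → ZMod 2) (n : ℕ) : (resFn η n).length = n := by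
  simp [resFn]

lemma resFn_take (η : ℕ → ZMod 2) {m n : ℕ} (h : m ≤ n) :
    (resFn η n).take m = resFn η m := by
  apply List.ext_getElem <;> simp [resFn, h]

lemma resFn_add (η x : ℕ → ZMod 2) (n : ℕ) :
    resFn (η + x) n = List.zipWith (· + ·) (resFn η n) (resFn x n) := by
  apply List.ext_getElem <;> simp [resFn]

lemma zipWith_add_zipWith_add_cancel (s ρ : BSeq) (h : s.length = ρ.length) :
    List.zipWith (· + ·) (List.zipWith (· + ·) s ρ) ρ = s := by
  apply List.ext_getElem
  · simp [h]
  · intro i _ _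
    simp [add_assoc, CharTwo.add_self_eq_zero]

lemma mem_TplusX_iff {T : Set BSeq} {x : ℕ → ZMod 2} {s : BSeq} :
    s ∈ TplusX T x ↔ List.zipWith (· + ·) s (resFn x s.length) ∈ T := by
  constructor
  · rintro ⟨t, ht, rfl⟩
    simpa [zipWith_add_zipWith_add_cancel, resFn_length] using ht
  · intro hs
    refine ⟨_, hs, ?_⟩
    simpa [resFn_length] using zipWith_add_zipWith_add_cancel s _ (resFn_length x _).symm

lemma resFn_mem_TplusX_iff {T : Set BSeq} {x η : ℕ → ZMod 2} {n : ℕ} :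
    resFn η n ∈ TplusX T x ↔ resFn (η + x) n ∈ T := by
  rw [mem_TplusX_iff, resFn_length, resFn_add]

lemma mem_addX_iff {A : Set (ℕ → ZMod 2)} {x η : ℕ → ZMod 2} : η ∈ addX A x ↔ η + x ∈ A := by
  have hcancel : ∀ y : ℕ → ZMod 2, y + x + x = y := fun y => by
    rw [add_assoc, CharTwo.add_self_eq_zero, add_zero]
  constructor
  · rintro ⟨y, hy, rfl⟩
    simpa [← Pi.add_def, hcancel] using hy
  · exact fun h => ⟨η + x, h, hcancel η⟩

lemma IsTree.mem_limT_of_forall_exists_le {T : Set BSeq} (hT : IsTree T) {η : ℕ → ZMod 2}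
    (h : ∀ n, ∃ m, n ≤ m ∧ resFn η m ∈ T) : η ∈ limT T := by
  intro n
  obtain ⟨m, hnm, hm⟩ := h n
  exact hT _ hm _ (resFn_take η hnm ▸ List.take_prefix n _)

lemma exists_prefix_chain {α : Type*} {P : ℕ → Set (List α)}
    (hext : ∀ k, ∀ t ∈ P k, ∃ t' ∈ P (k + 1), t <+: t') {s : List α} (hs : s ∈ P 0) :
    ∃ c : ℕ → List α, c 0 = s ∧ ∀ k, c k ∈ P k ∧ c k <+: c (k + 1) := by
  choose next hnext using hext
  let c : (k : ℕ) → P k := fun k =>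
    Nat.rec ⟨s, hs⟩ (fun k t => ⟨next k t.1 t.2, (hnext k t.1 t.2).1⟩) k
  exact ⟨fun k => (c k).1, rfl, fun k => ⟨(c k).2, (hnext k _ (c k).2).2⟩⟩

lemma exists_resFn_eq_of_prefix_chain {c : ℕ → BSeq} (hc : ∀ k, c k <+: c (k + 1))
    (hlen : ∀ i, ∃ k, i < (c k).length) : ∃ η : ℕ → ZMod 2, ∀ k, resFn η (c k).length = c k := by
  have hmono : ∀ {j k}, j ≤ k → c j <+: c k := fun {j} {k} hjk => by
    induction k, hjk using Nat.le_induction with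
    | base => exact List.prefix_refl _
    | succ k _ ih => exact ih.trans (hc k)
  choose K hK using hlen
  refine ⟨fun i => (c (K i))[i]'(hK i), fun k => List.ext_getElem (resFn_length _ _) ?_⟩
  intro i _ hi
  simp only [resFn, List.getElem_ofFn]
  rcases le_total k (K i) with h | h
  · exact ((hmono h).getElem hi).symm
  · exact (hmono h).getElem (hK i)

namespace Tower

variable {S : SimpleBase} {u : ℕ → LSet}

lemma len_strictMono (hu : Tower S u) : StrictMono fun n => (u n).len :=
  strictMono_nat_of_lt_succ fun n => (S.restr _ _ (hu n)).1

lemma resFn_mem_of_succ (hu : Tower S u) {η : ℕ → ZMod 2} {n : ℕ}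
    (h : resFn η (u (n + 1)).len ∈ (u (n + 1)).elts) : resFn η (u n).len ∈ (u n).elts := by
  obtain ⟨hlt, helts⟩ := S.restr _ _ (hu n)
  rw [helts, ← resFn_take η hlt.le]
  exact Set.mem_image_of_mem _ h

lemma resFn_mem_of_le (hu : Tower S u) {η : ℕ → ZMod 2} {m n : ℕ} (hmn : m ≤ n)
    (h : resFn η (u n).len ∈ (u n).elts) : resFn η (u m).len ∈ (u m).elts := by
  induction n, hmn using Nat.le_induction with
  | base => exact h
  | succ n _ ih => exact ih (hu.resFn_mem_of_succ h)

lemma exists_mem_cover_resFn_eq (hu : Tower S u) {n : ℕ} {s : BSeq} (hs : s ∈ (u n).elts) :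
    ∃ η ∈ cover u, resFn η (u n).len = s := by
  have hext : ∀ k, ∀ t ∈ (u (n + k)).elts, ∃ t' ∈ (u (n + k + 1)).elts, t <+: t' := by
    intro k t ht
    rw [(S.restr _ _ (hu (n + k))).2] at ht
    obtain ⟨t', ht', rfl⟩ := ht
    exact ⟨t', ht', List.take_prefix _ _⟩
  obtain ⟨c, hc0, hc⟩ := exists_prefix_chain (P := fun k => (u (n + k)).elts) hext hs
  have hclen : ∀ k, (c k).length = (u (n + k)).len := fun k => (u (n + k)).hlen _ (hc k).1
  have hunbounded : ∀ i, ∃ k, i < (c k).length := fun i =>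
    ⟨i + 1, (hclen _).symm ▸ lt_of_lt_of_le (by omega) hu.len_strictMono.le_apply⟩
  obtain ⟨η, hη⟩ := exists_resFn_eq_of_prefix_chain (fun k => (hc k).2) hunbounded
  have hηc : ∀ k, resFn η (u (n + k)).len = c k := fun k => hclen k ▸ hη k
  refine ⟨η, fun m => hu.resFn_mem_of_le (Nat.le_add_left m n) ?_, by rw [← hc0, ← hηc 0]; rfl⟩
  exact (hηc m).symm ▸ (hc m).1

end Tower

theorem stmt13_general (S : SimpleBase) (T : Set BSeq) (hT : IsTree T)
    (u : ℕ → LSet) (hu : Tower S u) (x : ℕ → ZMod 2) :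
    cover u ⊆ addX (limT T) x ↔ ∀ n, (u n).elts ⊆ TplusX T x := by
  constructor
  · intro hcover n s hs
    obtain ⟨η, hη, rfl⟩ := hu.exists_mem_cover_resFn_eq hs
    exact resFn_mem_TplusX_iff.2 (mem_addX_iff.1 (hcover hη) _)
  · intro hlevels η hη
    refine mem_addX_iff.2 (hT.mem_limT_of_forall_exists_le fun n => ?_)
    exact ⟨(u n).len, hu.len_strictMono.le_apply, resFn_mem_TplusX_iff.1 (hlevels n (hη n))⟩

/-- `C(ū) ⊆ lim(T) + x` iff every level of the tower lies in `T + x`. -/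
theorem stmt13 (S : SimpleBase) (T : Set BSeq) (hT : IsTree T) (hnm : NoMaxNodes T)
    (u : ℕ → LSet) (hu : Tower S u) (x : ℕ → ZMod 2) :
    cover u ⊆ addX (limT T) x ↔ ∀ n, (u n).elts ⊆ TplusX T x :=
  stmt13_general S T hT u hu x
end

section
/- If NDRK(T̄) ≥ ω₁ then NDRK(T̄) = ∞; that is, if some m ∈ M_{T̄,Ō} has ndrk(m) ≥ ω₁ then there is m with ndrk(m) = ∞, equivalently sup{ndrk(m)+1 : m ∈ M_{T̄,Ō}} is either < ω₁ or equal to ∞. -/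
attribute [local instance] Classical.propDecidable

/-- A finite approximation tuple `m = (ℓ, ι, u, h̄, ḡ)` (Definition 3.9 data). -/
structure MTuple where
  len : ℕ
  iota : ℕ
  u : Set BSeq
  g : ℕ → BSeq → BSeq → LSet
  h : ℕ → BSeq → BSeq → ℕ

/-- `m ∈ M_{T̄,Ō}` (Definition 3.9, clauses (a)–(e)). -/
def IsM (T : ℕ → Set BSeq) (B : IndexedBase) (m : MTuple) : Prop :=
  0 < m.len ∧ (∀ x ∈ m.u, x.length = m.len) ∧ 2 ≤ m.u.ncard ∧
  (B.istar ≠ ⊤ → (m.iota : ℕ∞) = B.istar) ∧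
  (B.istar = ⊤ → 3 ≤ m.iota) ∧
  (∀ i < m.iota, ∀ η ∈ m.u, ∀ ν ∈ m.u, η ≠ ν →
      (B.base i).mem (m.g i η ν) ∧ m.g i η ν = m.g i ν η ∧ (m.g i η ν).len = m.len) ∧
  (∀ i i' : ℕ, i < i' → i' < m.iota → ∀ η ∈ m.u, ∀ ν ∈ m.u, η ≠ ν →
      Disjoint (m.g i η ν).elts (m.g i' η ν).elts) ∧
  (∀ i < m.iota, ∀ η ∈ m.u, ∀ ν ∈ m.u, η ≠ ν →
      ∀ σ ∈ (m.g i η ν).elts, List.zipWith (· + ·) η σ ∈ T (m.h i η ν))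

/-- `m ⊑ n`: `n` strictly extends `m` (Definition 3.11). -/
def Sqsub (B : IndexedBase) (m n : MTuple) : Prop :=
  m.len < n.len ∧ m.iota ≤ n.iota ∧ m.u = (List.take m.len) '' n.u ∧
  ∀ η ∈ n.u, ∀ ν ∈ n.u, η ≠ ν → List.take m.len η ≠ List.take m.len ν →
    ∀ i < m.iota,
      (B.base i).prec (m.g i (List.take m.len η) (List.take m.len ν)) (n.g i η ν) ∧
      m.h i (List.take m.len η) (List.take m.len ν) = n.h i η ν

/-- The derived hierarchy `D^{T̄}(α)` (Definition 3.12(1)). -/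
def Dset (T : ℕ → Set BSeq) (B : IndexedBase) (α : Ordinal.{0}) : Set MTuple :=
  @Ordinal.limitRecOn (fun _ : Ordinal.{0} => Set MTuple) α
    {m | IsM T B m}
    (fun _ Dβ => {m | IsM T B m ∧ ∀ ν ∈ m.u, ∃ n ∈ Dβ, Sqsub B m n ∧
        (B.istar = ⊤ → m.iota < n.iota) ∧ 2 ≤ {η ∈ n.u | ν <+: η}.ncard})
    (fun o _ ih => ⋂ (β : Ordinal.{0}), ⋂ (h : β < o), ih β h)

/-- The non-disjointness rank `ndrk` (Definition 3.12(2)); `⊤` codes `∞`. -/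
noncomputable def ndrk (T : ℕ → Set BSeq) (B : IndexedBase) (m : MTuple) :
    WithTop Ordinal.{0} :=
  if ∀ α : Ordinal.{0}, m ∈ Dset T B α then ⊤
  else ((sInf {α : Ordinal.{0} | m ∉ Dset T B (α + 1)} : Ordinal) : WithTop Ordinal)

/-! The hierarchy `D(α)` decreases, and once `D(β + 1) = D(β)` it is constant from `β` on.
So if a tuple of rank `≥ ω₁` leaves the hierarchy at some stage, then `D` drops strictly at
every `β < ω₁`, and a tuple leaving at `β` can be chosen for each `β`. These `ℵ₁` tuples are
pairwise distinguished by the hierarchy, whereas membership in every `D(α)` depends only on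
the hereditarily finite core of a tuple (`ℓ`, `ι`, `u`, and `ḡ`, `h̄` at `i < ι` and distinct
`η, ν ∈ u`), which takes only countably many values. -/

open Ordinal Order Cardinal

section Counting

variable {α γ : Type*} {D : Ordinal → Set α}

theorem card_le_aleph0_of_diff_nonempty (hD : Antitone D) (f : α → γ)
    (hf : (f '' D 0).Countable)
    (hfD : ∀ β x y, x ∈ D 0 → f x = f y → y ∈ D β → x ∈ D β)
    {o : Ordinal} (hdrop : ∀ β < o, (D β \ D (β + 1)).Nonempty) : o.card ≤ ℵ₀ := by
  choose x hx using hdrop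
  have hx₀ (β : Ordinal) (hβ : β < o) : x β hβ ∈ D 0 := hD (zero_le (a := β)) (hx β hβ).1
  let e : Set.Iio o → f '' D 0 := fun β => ⟨f (x β β.2), x β β.2, hx₀ β β.2, rfl⟩
  have he : Function.Injective e := by
    refine Function.Injective.of_lt_imp_ne fun ⟨β, hβ⟩ ⟨β', hβ'⟩ hlt heq => ?_
    have hmem : x β' hβ' ∈ D (β + 1) := hD (add_one_le_of_lt hlt) (hx β' hβ').1
    exact (hx β hβ).2 (hfD _ _ _ (hx₀ β hβ) (congrArg Subtype.val heq) hmem)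
  have : Countable (Set.Iio o) := haveI := hf.to_subtype; he.countable
  have hle := Cardinal.mk_le_aleph0 (α := Set.Iio o)
  rwa [Cardinal.mk_Iio_ordinal, Cardinal.lift_le_aleph0] at hle

end Counting

theorem LSet.elts_finite (w : LSet) : w.elts.Finite :=
  (List.finite_length_eq (ZMod 2) w.len).subset w.hlen

theorem LSet.ext {w w' : LSet} (hlen : w.len = w'.len) (helts : w.elts = w'.elts) : w = w' := by
  cases w; cases w'; simp_all

instance : Countable LSet := by
  refine Function.Injective.countable (f := fun w : LSet => (w.len, w.elts_finite.toFinset)) ?_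
  intro w w' h
  simp only [Prod.mk.injEq, Set.Finite.toFinset_inj] at h
  exact LSet.ext h.1 h.2

def MTuple.core (m : MTuple) : ℕ × ℕ × Set BSeq × Set (ℕ × BSeq × BSeq × LSet × ℕ) :=
  (m.len, m.iota, m.u,
    {x | ∃ i < m.iota, ∃ η ∈ m.u, ∃ ν ∈ m.u, η ≠ ν ∧ x = (i, η, ν, m.g i η ν, m.h i η ν)})

theorem MTuple.data_eq_of_core_eq {m m' : MTuple} (hc : m.core = m'.core) :
    m.len = m'.len ∧ m.iota = m'.iota ∧ m.u = m'.u ∧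
      ∀ i < m.iota, ∀ η ∈ m.u, ∀ ν ∈ m.u, η ≠ ν →
        m.g i η ν = m'.g i η ν ∧ m.h i η ν = m'.h i η ν := by
  simp only [MTuple.core, Prod.mk.injEq] at hc
  obtain ⟨hlen, hiota, hu, hgraph⟩ := hc
  refine ⟨hlen, hiota, hu, fun i hi η hη ν hν hne => ?_⟩
  have hx : (i, η, ν, m.g i η ν, m.h i η ν) ∈
      {x | ∃ i < m.iota, ∃ η ∈ m.u, ∃ ν ∈ m.u, η ≠ ν ∧ x = (i, η, ν, m.g i η ν, m.h i η ν)} :=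
    ⟨i, hi, η, hη, ν, hν, hne, rfl⟩
  rw [hgraph] at hx
  obtain ⟨_, -, _, -, _, -, -, hx⟩ := hx
  simp only [Prod.mk.injEq] at hx
  obtain ⟨rfl, rfl, rfl, hg, hh⟩ := hx
  exact ⟨hg, hh⟩

theorem IsM.u_finite {T : ℕ → Set BSeq} {B : IndexedBase} {m : MTuple} (hm : IsM T B m) :
    m.u.Finite :=
  (List.finite_length_eq (ZMod 2) m.len).subset hm.2.1

theorem countable_image_core (T : ℕ → Set BSeq) (B : IndexedBase) :
    (MTuple.core '' {m | IsM T B m}).Countable := by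
  refine ((Set.countable_univ (α := ℕ)).prod ((Set.countable_univ (α := ℕ)).prod
    ((Set.Countable.ofPred_finite (α := BSeq)).prod
      (Set.Countable.ofPred_finite (α := ℕ × BSeq × BSeq × LSet × ℕ))))).mono ?_
  rintro _ ⟨m, hm, rfl⟩
  have hu := hm.u_finite
  refine ⟨trivial, trivial, hu, ?_⟩
  refine (((Set.finite_Iio m.iota).prod (hu.prod hu)).image
    fun p => (p.1, p.2.1, p.2.2, m.g p.1 p.2.1 p.2.2, m.h p.1 p.2.1 p.2.2)).subset ?_
  rintro _ ⟨i, hi, η, hη, ν, hν, -, rfl⟩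
  exact ⟨(i, η, ν), ⟨hi, hη, hν⟩, rfl⟩

theorem Sqsub.of_core_eq {B : IndexedBase} {m m' n : MTuple} (hc : m.core = m'.core)
    (h : Sqsub B m n) : Sqsub B m' n := by
  obtain ⟨hlen, hiota, hu, hgh⟩ := MTuple.data_eq_of_core_eq hc
  obtain ⟨hlt, hle, hres, hext⟩ := h
  refine ⟨hlen ▸ hlt, hiota ▸ hle, hlen ▸ hu ▸ hres, fun η hη ν hν hne hres_ne i hi => ?_⟩
  rw [← hlen] at hres_ne ⊢
  rw [← hiota] at hi
  have hηu : List.take m.len η ∈ m.u := hres ▸ Set.mem_image_of_mem _ hη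
  have hνu : List.take m.len ν ∈ m.u := hres ▸ Set.mem_image_of_mem _ hν
  obtain ⟨hg, hh⟩ := hgh i hi _ hηu _ hνu hres_ne
  rw [← hg, ← hh]
  exact hext η hη ν hν hne hres_ne i hi

section DerivedHierarchy

variable (T : ℕ → Set BSeq) (B : IndexedBase)

def derive (S : Set MTuple) : Set MTuple :=
  {m | IsM T B m ∧ ∀ ν ∈ m.u, ∃ n ∈ S, Sqsub B m n ∧
    (B.istar = ⊤ → m.iota < n.iota) ∧ 2 ≤ {η ∈ n.u | ν <+: η}.ncard}

theorem derive_mono : Monotone (derive T B) := by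
  rintro S S' hS m ⟨hm, hext⟩
  refine ⟨hm, fun ν hν => ?_⟩
  obtain ⟨n, hn, hrest⟩ := hext ν hν
  exact ⟨n, hS hn, hrest⟩

theorem mem_derive_of_core_eq {S : Set MTuple} {m m' : MTuple} (hm' : IsM T B m')
    (hc : m.core = m'.core) (hm : m ∈ derive T B S) : m' ∈ derive T B S := by
  obtain ⟨-, hiota, hu, -⟩ := MTuple.data_eq_of_core_eq hc
  refine ⟨hm', fun ν hν => ?_⟩
  obtain ⟨n, hn, hsq, hincr, hsplit⟩ := hm.2 ν (hu ▸ hν)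
  exact ⟨n, hn, hsq.of_core_eq hc, hiota ▸ hincr, hsplit⟩

theorem Dset_zero : Dset T B 0 = {m | IsM T B m} :=
  Ordinal.limitRecOn_zero ..

theorem Dset_add_one (β : Ordinal) : Dset T B (β + 1) = derive T B (Dset T B β) :=
  Ordinal.limitRecOn_add_one ..

theorem Dset_of_isSuccLimit {o : Ordinal} (ho : IsSuccLimit o) :
    Dset T B o = ⋂ β < o, Dset T B β :=
  Ordinal.limitRecOn_limit _ _ _ _ ho

theorem Dset_add_one_subset (β : Ordinal) : Dset T B (β + 1) ⊆ Dset T B β := by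
  induction β using Ordinal.limitRecOn with
  | zero =>
    rw [Dset_add_one, Dset_zero]
    exact fun m hm => hm.1
  | add_one β ih =>
    exact (Dset_add_one T B (β + 1)).subset.trans
      ((derive_mono T B ih).trans (Dset_add_one T B β).superset)
  | limit o ho ih =>
    rw [Dset_of_isSuccLimit T B ho]
    refine Set.subset_iInter₂ fun β hβ => ?_
    calc Dset T B (o + 1) = derive T B (⋂ β < o, Dset T B β) := by
          rw [Dset_add_one, Dset_of_isSuccLimit T B ho]
      _ ⊆ derive T B (Dset T B β) := derive_mono T B (Set.biInter_subset_of_mem hβ)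
      _ ⊆ Dset T B β := Dset_add_one T B β ▸ ih β hβ

theorem Dset_antitone : Antitone (Dset T B) := by
  intro β γ hβγ
  induction γ using Ordinal.limitRecOn with
  | zero => rw [nonpos_iff_eq_zero.1 hβγ]
  | add_one γ ih =>
    rcases (Order.le_succ_iff_eq_or_le.1 (Order.succ_eq_add_one γ ▸ hβγ)) with hβ | hβ
    · rw [hβ, Order.succ_eq_add_one]
    · exact (Dset_add_one_subset T B γ).trans (ih hβ)
  | limit o ho _ =>
    rcases hβγ.eq_or_lt with rfl | hβ
    · rfl
    · rw [Dset_of_isSuccLimit T B ho]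
      exact Set.biInter_subset_of_mem hβ

theorem Dset_eq_of_add_one_eq {β γ : Ordinal} (hβ : Dset T B (β + 1) = Dset T B β)
    (hβγ : β ≤ γ) : Dset T B γ = Dset T B β := by
  induction γ using Ordinal.limitRecOn with
  | zero => rw [nonpos_iff_eq_zero.1 hβγ]
  | add_one γ ih =>
    rcases (Order.le_succ_iff_eq_or_le.1 (Order.succ_eq_add_one γ ▸ hβγ)) with hγ | hγ
    · rw [hγ, Order.succ_eq_add_one]
    · rw [Dset_add_one, ih hγ, ← Dset_add_one, hβ]
  | limit o ho ih =>
    refine (Dset_antitone T B hβγ).antisymm ?_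
    rw [Dset_of_isSuccLimit T B ho]
    refine Set.subset_iInter₂ fun δ hδ => ?_
    rcases le_total β δ with hβδ | hδβ
    · exact (ih δ hδ hβδ).ge
    · exact Dset_antitone T B hδβ

theorem Dset_diff_nonempty {m : MTuple} {β γ : Ordinal} (hβ : m ∈ Dset T B (β + 1))
    (hγ : m ∉ Dset T B γ) : (Dset T B β \ Dset T B (β + 1)).Nonempty := by
  by_contra hempty
  have hstable : Dset T B (β + 1) = Dset T B β :=
    (Dset_add_one_subset T B β).antisymm
      (Set.sdiff_eq_empty.1 (Set.not_nonempty_iff_eq_empty.1 hempty))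
  rcases le_total β γ with hβγ | hγβ
  · exact hγ (Dset_eq_of_add_one_eq T B hstable hβγ ▸ hstable ▸ hβ)
  · exact hγ (Dset_antitone T B hγβ (hstable ▸ hβ))

theorem mem_Dset_of_core_eq {m m' : MTuple} (hm' : IsM T B m') (hc : m.core = m'.core)
    {α : Ordinal} (hm : m ∈ Dset T B α) : m' ∈ Dset T B α := by
  induction α using Ordinal.limitRecOn with
  | zero => rwa [Dset_zero]
  | add_one β _ =>
    rw [Dset_add_one] at hm ⊢
    exact mem_derive_of_core_eq T B hm' hc hm
  | limit o ho ih =>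
    rw [Dset_of_isSuccLimit T B ho, Set.mem_iInter₂] at hm ⊢
    exact fun β hβ => ih β hβ (hm β hβ)

theorem mem_Dset_add_one_of_lt_ndrk {m : MTuple} {β : Ordinal}
    (h : (β : WithTop Ordinal) < ndrk T B m) : m ∈ Dset T B (β + 1) := by
  unfold ndrk at h
  split_ifs at h with hall
  · exact hall _
  · by_contra hβ
    exact notMem_of_lt_csInf (WithTop.coe_lt_coe.1 h) (OrderBot.bddBelow _) hβ

theorem exists_notMem_Dset_of_ndrk_ne_top {m : MTuple} (h : ndrk T B m ≠ ⊤) :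
    ∃ γ, m ∉ Dset T B γ := by
  by_contra! hall
  exact h (if_pos hall)

end DerivedHierarchy

theorem stmt19_general (T : ℕ → Set BSeq) (B : IndexedBase)
    (h : ∃ m, IsM T B m ∧
      (((Cardinal.aleph 1).ord : Ordinal.{0}) : WithTop Ordinal.{0}) ≤ ndrk T B m) :
    ∃ m, IsM T B m ∧ ndrk T B m = (⊤ : WithTop Ordinal.{0}) := by
  obtain ⟨m, hm, hrank⟩ := h
  refine ⟨m, hm, ?_⟩
  by_contra htop
  obtain ⟨γ, hγ⟩ := exists_notMem_Dset_of_ndrk_ne_top T B htop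
  have hdrop : ∀ β < (aleph 1).ord, (Dset T B β \ Dset T B (β + 1)).Nonempty := fun β hβ =>
    Dset_diff_nonempty T B
      (mem_Dset_add_one_of_lt_ndrk T B ((WithTop.coe_lt_coe.2 hβ).trans_le hrank)) hγ
  have hcard := card_le_aleph0_of_diff_nonempty (Dset_antitone T B) MTuple.core
    (Dset_zero T B ▸ countable_image_core T B)
    (fun _ _ _ hx hc hy => mem_Dset_of_core_eq T B ((Dset_zero T B).subset hx) hc.symm hy) hdrop
  rw [card_ord] at hcard
  exact aleph0_lt_aleph_one.not_ge hcard

/-- Lemma 3.10(7): if some tuple has rank `≥ ω₁`, then some tuple has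
rank `∞`. -/
theorem stmt19 (T : ℕ → Set BSeq) (hTt : ∀ n, IsTree (T n))
    (hTm : ∀ n, NoMaxNodes (T n)) (B : IndexedBase) (hB : Nice B)
    (h : ∃ m, IsM T B m ∧
      (((Cardinal.aleph 1).ord : Ordinal.{0}) : WithTop Ordinal.{0}) ≤ ndrk T B m) :
    ∃ m, IsM T B m ∧ ndrk T B m = (⊤ : WithTop Ordinal.{0}) :=
  stmt19_general T B h
end
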